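/- Let G be an (n-3)-regular connected graph of order n ≥ 5. Then γ_p(G) = 1 if and only if there exists an edge uv ∈ E(G) such that |N[v] \ N[u]| = 1. Otherwise γ_p(G) = 2. -/

import Mathlib

open SimpleGraph

/-- `G.Obs S v` : vertex `v` eventually becomes monitored (black) when starting
from the set `S` and iteratively applying the zero-forcing propagation rule:
if a monitored vertex has exactly one unmonitored neighbor, that neighbor
becomes monitored. -/
inductive SimpleGraph.Obs {V : Type*} (G : SimpleGraph V) (S : Set V) : V → Prop
  | init {v : V} : v ∈ S → G.Obs S v
  | force {v w : V} : G.Obs S v → G.Adj v w →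
      (∀ u, G.Adj v u → u ≠ w → G.Obs S u) → G.Obs S w

/-- `S` is a zero forcing set of `G`. -/
def SimpleGraph.IsZeroForcingSet {V : Type*} (G : SimpleGraph V) (S : Set V) : Prop :=
  ∀ v, G.Obs S v

/-- The zero forcing number `Z(G)`. -/
noncomputable def SimpleGraph.zeroForcingNumber {V : Type*} (G : SimpleGraph V) : ℕ :=
  sInf {n | ∃ S : Set V, S.ncard = n ∧ G.IsZeroForcingSet S}

/-- The closed neighborhood `N[S]` of a set of vertices. -/
def SimpleGraph.closedNbhdSet {V : Type*} (G : SimpleGraph V) (S : Set V) : Set V :=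
  S ∪ {w | ∃ v ∈ S, G.Adj v w}

/-- `S` is a power dominating set of `G`: `N[S]` is a zero forcing set. -/
def SimpleGraph.IsPowerDominatingSet {V : Type*} (G : SimpleGraph V) (S : Set V) : Prop :=
  G.IsZeroForcingSet (G.closedNbhdSet S)

/-- The power domination number `γₚ(G)`. -/
noncomputable def SimpleGraph.powerDominationNumber {V : Type*} (G : SimpleGraph V) : ℕ :=
  sInf {n | ∃ S : Set V, S.ncard = n ∧ G.IsPowerDominatingSet S}

/-!
In an `(n - 3)`-regular graph the closed neighbourhood `N[u]` misses exactly two vertices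
`a, b`. Starting from `N[u]`, a first force is possible exactly when some neighbour `v` of `u`
is adjacent to exactly one of `a, b`, i.e. `|N[v] \ N[u]| = 1`; once only one vertex is
unmonitored, any of its neighbours forces it (degrees are `n - 3 ≥ 2`). This characterises
`γₚ(G) = 1`. Moreover `N[{u, a}]` already contains everything except possibly `b`, so
`γₚ(G) ≤ 2` always.
-/

namespace SimpleGraph

variable {V : Type*} {G : SimpleGraph V}

theorem Obs.mem_of_forcingClosed {S T : Set V} (hST : S ⊆ T)
    (hT : ∀ v w, v ∈ T → G.Adj v w → (∀ u, G.Adj v u → u ≠ w → u ∈ T) → w ∈ T)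
    {v : V} (h : G.Obs S v) : v ∈ T := by
  induction h with
  | init hv => exact hST hv
  | force _ hvw _ ihv ihu => exact hT _ _ ihv hvw ihu

theorem isZeroForcingSet_of_forall_ne {S : Set V} {b w : V}
    (hS : ∀ x, x ≠ b → G.Obs S x) (hwb : G.Adj w b) : G.IsZeroForcingSet S := by
  intro x
  by_cases hx : x = b
  · subst hx
    exact .force (hS w hwb.ne) hwb fun u _ hu => hS u hu
  · exact hS x hx

theorem closedNbhdSet_singleton (u : V) :
    G.closedNbhdSet {u} = insert u (G.neighborSet u) := by
  ext x
  simp [closedNbhdSet]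

theorem isPowerDominatingSet_univ : G.IsPowerDominatingSet Set.univ :=
  fun _ => .init (Or.inl trivial)

theorem not_isPowerDominatingSet_empty [Nonempty V] : ¬ G.IsPowerDominatingSet ∅ := by
  intro h
  obtain ⟨v⟩ := ‹Nonempty V›
  exact (h v).mem_of_forcingClosed (T := ∅) (by simp [closedNbhdSet]) (by simp)

theorem powerDominationNumber_le {S : Set V} (h : G.IsPowerDominatingSet S) :
    G.powerDominationNumber ≤ S.ncard :=
  Nat.sInf_le ⟨S, rfl, h⟩

theorem exists_isPowerDominatingSet_ncard_eq :
    ∃ S : Set V, S.ncard = G.powerDominationNumber ∧ G.IsPowerDominatingSet S :=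
  Nat.sInf_mem (s := {n | ∃ S : Set V, S.ncard = n ∧ G.IsPowerDominatingSet S})
    ⟨_, Set.univ, rfl, isPowerDominatingSet_univ⟩

theorem powerDominationNumber_pos [Finite V] [Nonempty V] : 0 < G.powerDominationNumber := by
  obtain ⟨S, hS, hPD⟩ := G.exists_isPowerDominatingSet_ncard_eq
  refine Nat.pos_of_ne_zero fun h0 => G.not_isPowerDominatingSet_empty ?_
  rwa [← (Set.ncard_eq_zero (Set.toFinite S)).mp (hS.trans h0)]

theorem powerDominationNumber_eq_one_iff [Finite V] [Nonempty V] :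
    G.powerDominationNumber = 1 ↔ ∃ u, G.IsPowerDominatingSet {u} := by
  constructor
  · intro h
    obtain ⟨S, hS, hPD⟩ := G.exists_isPowerDominatingSet_ncard_eq
    obtain ⟨u, rfl⟩ := Set.ncard_eq_one.mp (hS.trans h)
    exact ⟨u, hPD⟩
  · rintro ⟨u, hu⟩
    have := powerDominationNumber_le hu
    have := G.powerDominationNumber_pos
    rw [Set.ncard_singleton] at *
    omega

/-- Since `N[u]` is not everything, some force leaves `N[u]`: if `v` forces `w ∉ N[u]`, then
`N[v] \ N[u] = {w}`. -/
theorem IsPowerDominatingSet.exists_adj_ncard_closedNbhd_diff_eq_one {u : V}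
    (h : G.IsPowerDominatingSet {u})
    (hu : insert u (G.neighborSet u) ≠ Set.univ) :
    ∃ v, G.Adj u v ∧
      ((insert v (G.neighborSet v)) \ (insert u (G.neighborSet u))).ncard = 1 := by
  by_contra hc
  push Not at hc
  set M := insert u (G.neighborSet u)
  have hclosed : ∀ v w, v ∈ M → G.Adj v w → (∀ t, G.Adj v t → t ≠ w → t ∈ M) → w ∈ M := by
    intro v w hv hvw hforce
    by_contra hw
    have huv : G.Adj u v := by
      rcases hv with rfl | huv
      · exact absurd (Set.mem_insert_of_mem _ hvw) hw
      · exact huv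
    refine hc v huv (Set.ncard_eq_one.mpr ⟨w, ?_⟩)
    ext x
    simp only [Set.mem_sdiff, Set.mem_insert_iff, mem_neighborSet, Set.mem_singleton_iff]
    constructor
    · rintro ⟨rfl | hvx, hxM⟩
      · exact absurd hv hxM
      · by_contra hxw
        exact hxM (hforce x hvx hxw)
    · rintro rfl
      exact ⟨Or.inr hvw, hw⟩
  refine hu (Set.eq_univ_of_forall fun x => (h x).mem_of_forcingClosed ?_ hclosed)
  rw [closedNbhdSet_singleton]

theorem isPowerDominatingSet_singleton_of_ncard_closedNbhd_diff_eq_one {u v a b : V}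
    (hcompl : (insert u (G.neighborSet u))ᶜ = {a, b}) (hnbr : ∀ x, ∃ w, G.Adj w x)
    (huv : G.Adj u v)
    (hnc : ((insert v (G.neighborSet v)) \ (insert u (G.neighborSet u))).ncard = 1) :
    G.IsPowerDominatingSet {u} := by
  obtain ⟨w, hw⟩ := Set.ncard_eq_one.mp hnc
  set M := insert u (G.neighborSet u)
  have hwdiff : w ∈ insert v (G.neighborSet v) \ M := hw ▸ rfl
  obtain ⟨c, hc⟩ : ∃ c, Mᶜ = {w, c} := by
    have hwab : w ∈ ({a, b} : Set V) := hcompl ▸ Set.mem_compl hwdiff.2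
    rcases hwab with rfl | rfl
    exacts [⟨b, hcompl⟩, ⟨a, hcompl.trans (Set.pair_comm _ _)⟩]
  have hvM : v ∈ M := Set.mem_insert_of_mem _ huv
  have hvw : G.Adj v w := by
    rcases hwdiff.1 with rfl | hvw
    exacts [absurd hvM hwdiff.2, hvw]
  have hwObs : G.Obs M w := by
    refine .force (.init hvM) hvw fun t hvt htw => .init ?_
    by_contra htM
    exact htw (hw ▸ ⟨Set.mem_insert_of_mem _ hvt, htM⟩ : t ∈ ({w} : Set V))
  obtain ⟨z, hzc⟩ := hnbr c
  unfold IsPowerDominatingSet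
  rw [closedNbhdSet_singleton]
  refine isZeroForcingSet_of_forall_ne (fun x hxc => ?_) hzc
  by_cases hxM : x ∈ M
  · exact .init hxM
  · have hx : x ∈ ({w, c} : Set V) := hc ▸ Set.mem_compl hxM
    obtain rfl : x = w := by simpa [hxc] using hx
    exact hwObs

theorem isPowerDominatingSet_pair_of_compl_closedNbhd_eq {u a b w : V}
    (hcompl : (insert u (G.neighborSet u))ᶜ = {a, b}) (hwb : G.Adj w b) :
    G.IsPowerDominatingSet {u, a} := by
  refine isZeroForcingSet_of_forall_ne (fun x hxb => .init ?_) hwb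
  by_cases hxu : x ∈ insert u (G.neighborSet u)
  · rcases hxu with rfl | hux
    exacts [Or.inl (Set.mem_insert _ _), Or.inr ⟨u, Set.mem_insert _ _, hux⟩]
  · have hx : x ∈ ({a, b} : Set V) := hcompl ▸ Set.mem_compl hxu
    obtain rfl : x = a := by simpa [hxb] using hx
    exact Or.inl (Set.mem_insert_of_mem _ rfl)

theorem IsRegularOfDegree.exists_compl_closedNbhd_eq_pair [Fintype V] [DecidableRel G.Adj]
    (hreg : G.IsRegularOfDegree (Fintype.card V - 3)) (hn : 3 ≤ Fintype.card V) (u : V) :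
    ∃ a b, a ≠ b ∧ (insert u (G.neighborSet u))ᶜ = {a, b} := by
  apply Set.ncard_eq_two.mp
  have hsum := Set.ncard_add_ncard_compl (insert u (G.neighborSet u))
  rw [Set.ncard_insert_of_notMem (G.notMem_neighborSet_self), Set.ncard_eq_toFinset_card',
    Set.toFinset_card, card_neighborSet_eq_degree, hreg u, Nat.card_eq_fintype_card] at hsum
  omega

end SimpleGraph

theorem stmt5_general {V : Type*} [Fintype V] (G : SimpleGraph V) [DecidableRel G.Adj]
    (hn : 5 ≤ Fintype.card V)
    (hreg : G.IsRegularOfDegree (Fintype.card V - 3)) :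
    (G.powerDominationNumber = 1 ↔
      ∃ u v : V, G.Adj u v ∧
        ((insert v (G.neighborSet v)) \ (insert u (G.neighborSet u))).ncard = 1) ∧
    ((¬ ∃ u v : V, G.Adj u v ∧
        ((insert v (G.neighborSet v)) \ (insert u (G.neighborSet u))).ncard = 1) →
      G.powerDominationNumber = 2) := by
  have : Nonempty V := Fintype.card_pos_iff.mp (by omega)
  have hnbr : ∀ x, ∃ w, G.Adj w x := fun x =>
    ((G.degree_pos_iff_exists_adj x).mp (by rw [hreg x]; omega)).imp fun _ => G.adj_symm
  have hcompl := hreg.exists_compl_closedNbhd_eq_pair (by omega)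
  have hone : G.powerDominationNumber = 1 ↔ ∃ u v : V, G.Adj u v ∧
      ((insert v (G.neighborSet v)) \ (insert u (G.neighborSet u))).ncard = 1 := by
    rw [powerDominationNumber_eq_one_iff]
    constructor
    · rintro ⟨u, hu⟩
      obtain ⟨a, b, -, h⟩ := hcompl u
      refine ⟨u, hu.exists_adj_ncard_closedNbhd_diff_eq_one fun huniv => ?_⟩
      exact (Set.insert_nonempty a {b}).ne_empty (by simpa [huniv] using h.symm)
    · rintro ⟨u, v, huv, hnc⟩
      obtain ⟨a, b, -, h⟩ := hcompl u
      exact ⟨u, isPowerDominatingSet_singleton_of_ncard_closedNbhd_diff_eq_one h hnbr huv hnc⟩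
  refine ⟨hone, fun hc => ?_⟩
  obtain ⟨u⟩ := ‹Nonempty V›
  obtain ⟨a, b, -, h⟩ := hcompl u
  obtain ⟨w, hwb⟩ := hnbr b
  have hle := (powerDominationNumber_le
    (isPowerDominatingSet_pair_of_compl_closedNbhd_eq h hwb)).trans (Set.ncard_insert_le u {a})
  rw [Set.ncard_singleton] at hle
  have := G.powerDominationNumber_pos
  have := mt hone.mp hc
  omega

theorem stmt5 {V : Type*} [Fintype V] (G : SimpleGraph V) [DecidableRel G.Adj]
    (hconn : G.Connected) (hn : 5 ≤ Fintype.card V)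
    (hreg : G.IsRegularOfDegree (Fintype.card V - 3)) :
    (G.powerDominationNumber = 1 ↔
      ∃ u v : V, G.Adj u v ∧
        ((insert v (G.neighborSet v)) \ (insert u (G.neighborSet u))).ncard = 1) ∧
    ((¬ ∃ u v : V, G.Adj u v ∧
        ((insert v (G.neighborSet v)) \ (insert u (G.neighborSet u))).ncard = 1) →
      G.powerDominationNumber = 2) :=
  stmt5_general G hn hreg
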